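/- Fix a finite set P of predicate symbols (with finite arities) and a finite set C of constants, and a natural number k. Up to logical equivalence, there are only finitely many existentially closed conjunctions of atoms over P and C whose connected width is at most k (i.e., every connected component contains at most k atoms that mention a variable). -/

import Mathlib

/-- A relational atom over predicates `P`, variables `V` and constants `C`. -/
structure Atom (P V C : Type*) where
  pred : P
  args : List (V ⊕ C)
deriving DecidableEq

/-- The variables occurring in an atom. -/
def Atom.vars {P V C : Type*} (a : Atom P V C) : Set V := {v | Sum.inl v ∈ a.args}

/-- The variables occurring in a finite conjunction of atoms. -/
def varsFS {P V C : Type*} (F : Finset (Atom P V C)) : Set V :=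
  {v | ∃ a ∈ F, v ∈ a.vars}

/-- Connectivity of variables in the variable-hypergraph of `F`. -/
def connR {P V C : Type*} (F : Finset (Atom P V C)) : V → V → Prop :=
  Relation.ReflTransGen (fun u v : V => ∃ a ∈ F, u ∈ a.vars ∧ v ∈ a.vars)

/-- A first-order structure for the signature. -/
structure Interp (P C : Type*) where
  Dom : Type
  nonempty : Nonempty Dom
  rel : P → List Dom → Prop
  const : C → Dom

/-- Satisfaction of an atom under a variable assignment. -/
def Interp.holdsAtom {P C V : Type*} (M : Interp P C) (σ : V → M.Dom)
    (a : Atom P V C) : Prop :=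
  M.rel a.pred (a.args.map (Sum.elim σ M.const))

/-- Satisfaction of the existential closure of a conjunction of atoms. -/
def Interp.satCQ {P C V : Type*} (M : Interp P C) (F : Finset (Atom P V C)) : Prop :=
  ∃ σ : V → M.Dom, ∀ a ∈ F, M.holdsAtom σ a

/-- Logical equivalence of two existentially closed conjunctions of atoms. -/
def equivCQ {P V C : Type*} (F G : Finset (Atom P V C)) : Prop :=
  ∀ M : Interp P C, M.satCQ F ↔ M.satCQ G

/-!
Distinct connected components share no variables, so a conjunction is satisfied exactly when its
ground part and each of its components are. Under the width bound a component has at most `k`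
atoms, hence at most `k · max arity` variables; renamed injectively into
`{0, …, k · max arity - 1}` it becomes one of finitely many conjunctions. Putting each distinct
renamed component on its own block of variables (the image of `Nat.pair i`) gives an equivalent
conjunction that is determined by the ground part and the set of renamed components, and there
are only finitely many such pairs.
-/

open Set

section Atoms

variable {P V W C : Type*}

instance [Countable P] [Countable V] [Countable C] : Countable (Atom P V C) :=
  Function.Injective.countable (f := fun a : Atom P V C => (a.pred, a.args))
    fun ⟨_, _⟩ ⟨_, _⟩ h => by simp_all

def Atom.rename (ρ : V → W) (a : Atom P V C) : Atom P W C :=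
  ⟨a.pred, a.args.map (Sum.map ρ id)⟩

@[simp]
lemma Atom.vars_rename (ρ : V → W) (a : Atom P V C) : (a.rename ρ).vars = ρ '' a.vars := by
  ext w
  simp only [Atom.rename, Atom.vars, List.mem_map, mem_ofPred_eq, mem_image]
  constructor
  · rintro ⟨u | c, hu, h⟩
    · exact ⟨u, hu, by simpa using h⟩
    · simp at h
  · rintro ⟨u, hu, rfl⟩
    exact ⟨_, hu, rfl⟩

lemma Atom.finite_vars (a : Atom P V C) : a.vars.Finite :=
  (List.finite_toSet a.args).preimage Sum.inl_injective.injOn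

lemma Atom.ncard_vars_le (a : Atom P V C) : a.vars.ncard ≤ a.args.length := by
  classical
  calc a.vars.ncard ≤ (a.args.toFinset : Set (V ⊕ C)).ncard :=
        ncard_le_ncard_of_injOn Sum.inl (fun _ hv => List.mem_toFinset.2 hv)
          Sum.inl_injective.injOn
    _ ≤ a.args.length := by rw [ncard_coe_finset]; exact List.toFinset_card_le _

lemma varsFS_eq_biUnion (F : Finset (Atom P V C)) : varsFS F = ⋃ a ∈ F, a.vars := by
  ext; simp [varsFS]

lemma finite_varsFS (F : Finset (Atom P V C)) : (varsFS F).Finite := by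
  rw [varsFS_eq_biUnion]
  exact F.finite_toSet.biUnion fun a _ => a.finite_vars

lemma ncard_varsFS_le {F : Finset (Atom P V C)} {A : ℕ} (hA : ∀ a ∈ F, a.args.length ≤ A) :
    (varsFS F).ncard ≤ F.card * A := by
  rw [varsFS_eq_biUnion]
  calc (⋃ a ∈ F, a.vars).ncard ≤ ∑ a ∈ F, a.vars.ncard := F.set_ncard_biUnion_le _
    _ ≤ F.card • A := F.sum_le_card_nsmul _ _ fun a ha => a.ncard_vars_le.trans (hA a ha)
    _ = F.card * A := smul_eq_mul _ _

lemma varsFS_biUnion {ι : Type*} [DecidableEq (Atom P V C)] (S : Finset ι)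
    (r : ι → Finset (Atom P V C)) : varsFS (S.biUnion r) = ⋃ i ∈ S, varsFS (r i) := by
  ext; simp [varsFS]; tauto

lemma varsFS_image_rename [DecidableEq (Atom P W C)] (ρ : V → W) (F : Finset (Atom P V C)) :
    varsFS (F.image (Atom.rename ρ)) = ρ '' varsFS F := by
  simp only [varsFS_eq_biUnion, Finset.set_biUnion_finset_image, Atom.vars_rename, image_iUnion₂]

end Atoms

namespace Interp

variable {P V W C : Type*} (M : Interp P C)

lemma holdsAtom_congr {σ σ' : V → M.Dom} {a : Atom P V C} (h : EqOn σ σ' a.vars) :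
    M.holdsAtom σ a ↔ M.holdsAtom σ' a := by
  unfold holdsAtom
  rw [List.map_congr_left]
  rintro (v | c) hx
  · exact h hx
  · rfl

lemma holdsAtom_rename (σ : W → M.Dom) (ρ : V → W) (a : Atom P V C) :
    M.holdsAtom σ (a.rename ρ) ↔ M.holdsAtom (σ ∘ ρ) a := by
  simp [holdsAtom, Atom.rename, Function.comp_def, Sum.elim_map]

lemma satCQ_mono {F G : Finset (Atom P V C)} (h : G ⊆ F) : M.satCQ F → M.satCQ G :=
  fun ⟨σ, hσ⟩ => ⟨σ, fun a ha => hσ a (h ha)⟩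

lemma satCQ_empty : M.satCQ (∅ : Finset (Atom P V C)) :=
  ⟨fun _ => Classical.choice M.nonempty, by simp⟩

lemma satCQ_union [DecidableEq (Atom P V C)] {F G : Finset (Atom P V C)}
    (h : Disjoint (varsFS F) (varsFS G)) : M.satCQ (F ∪ G) ↔ M.satCQ F ∧ M.satCQ G := by
  classical
  refine ⟨fun hFG => ⟨M.satCQ_mono Finset.subset_union_left hFG,
    M.satCQ_mono Finset.subset_union_right hFG⟩, ?_⟩
  rintro ⟨⟨σ, hσ⟩, ⟨τ, hτ⟩⟩
  refine ⟨(varsFS F).piecewise σ τ, fun a ha => ?_⟩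
  rcases Finset.mem_union.1 ha with ha | ha
  · exact (M.holdsAtom_congr fun v hv =>
      piecewise_eq_of_mem (varsFS F) σ τ ⟨a, ha, hv⟩).2 (hσ a ha)
  · exact (M.holdsAtom_congr fun v hv => piecewise_eq_of_notMem (varsFS F) σ τ
      (h.notMem_of_mem_right ⟨a, ha, hv⟩)).2 (hτ a ha)

lemma satCQ_biUnion {ι : Type*} [DecidableEq ι] [DecidableEq (Atom P V C)] {S : Finset ι}
    {r : ι → Finset (Atom P V C)} (h : (S : Set ι).PairwiseDisjoint (varsFS ∘ r)) :
    M.satCQ (S.biUnion r) ↔ ∀ i ∈ S, M.satCQ (r i) := by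
  induction S using Finset.induction_on with
  | empty => simpa using M.satCQ_empty
  | insert i S hi ih =>
    rw [Finset.coe_insert, pairwiseDisjoint_insert] at h
    have hdisj : Disjoint (varsFS (r i)) (varsFS (S.biUnion r)) := by
      rw [varsFS_biUnion, disjoint_iUnion₂_right]
      exact fun j hj => h.2 j hj (ne_of_mem_of_not_mem hj hi).symm
    rw [Finset.biUnion_insert, M.satCQ_union hdisj, ih h.1, Finset.forall_mem_insert]

lemma satCQ_image_rename [Nonempty V] [DecidableEq (Atom P W C)] {F : Finset (Atom P V C)}
    {ρ : V → W} (h : InjOn ρ (varsFS F)) :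
    M.satCQ (F.image (Atom.rename ρ)) ↔ M.satCQ F := by
  simp only [satCQ, Finset.forall_mem_image, holdsAtom_rename]
  refine ⟨fun ⟨σ, hσ⟩ => ⟨σ ∘ ρ, hσ⟩, fun ⟨σ, hσ⟩ => ⟨σ ∘ Function.invFunOn ρ (varsFS F),
    fun a ha => (M.holdsAtom_congr fun v hv => ?_).2 (hσ a ha)⟩⟩
  simp [h.leftInvOn_invFunOn ⟨a, ha, hv⟩]

end Interp

section Components

variable {P V C : Type*} {F : Finset (Atom P V C)} {a : Atom P V C} {u v : V}

lemma connR_of_mem (ha : a ∈ F) (hu : u ∈ a.vars) (hv : v ∈ a.vars) : connR F u v :=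
  .single ⟨a, ha, hu, hv⟩

lemma connR_symm (h : connR F u v) : connR F v u := by
  induction h with
  | refl => exact .refl
  | tail _ hstep ih =>
    obtain ⟨a, ha, hx, hy⟩ := hstep
    exact (connR_of_mem ha hy hx).trans ih

open Classical in
noncomputable def component (F : Finset (Atom P V C)) (v : V) : Finset (Atom P V C) :=
  {b ∈ F | ∃ u ∈ b.vars, connR F v u}

open Classical in
lemma mem_component_iff {b : Atom P V C} :
    b ∈ component F v ↔ b ∈ F ∧ ∃ u ∈ b.vars, connR F v u :=
  Finset.mem_filter

lemma coe_component (F : Finset (Atom P V C)) (v : V) :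
    (component F v : Set (Atom P V C)) = {b | b ∈ F ∧ ∃ u ∈ b.vars, connR F v u} :=
  Set.ext fun _ => mem_component_iff

lemma component_subset : component F v ⊆ F :=
  fun _ hb => (mem_component_iff.1 hb).1

lemma mem_component (ha : a ∈ F) (hv : v ∈ a.vars) : a ∈ component F v :=
  mem_component_iff.2 ⟨ha, v, hv, .refl⟩

lemma connR_of_mem_varsFS_component (h : u ∈ varsFS (component F v)) : connR F v u := by
  obtain ⟨b, hb, hu⟩ := h
  obtain ⟨hbF, w, hw, hvw⟩ := mem_component_iff.1 hb
  exact hvw.trans (connR_of_mem hbF hw hu)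

lemma component_eq_of_connR (h : connR F u v) : component F u = component F v :=
  Finset.ext fun _ => by
    simp only [mem_component_iff]
    exact and_congr_right fun _ => exists_congr fun _ => and_congr_right fun _ =>
      ⟨(connR_symm h).trans, h.trans⟩

open Classical in
noncomputable def components (F : Finset (Atom P V C)) : Finset (Finset (Atom P V C)) :=
  (finite_varsFS F).toFinset.image (component F)

open Classical in
lemma mem_components {H : Finset (Atom P V C)} :
    H ∈ components F ↔ ∃ v ∈ varsFS F, component F v = H := by
  simp [components]

lemma pairwiseDisjoint_components (F : Finset (Atom P V C)) :
    (components F : Set (Finset (Atom P V C))).PairwiseDisjoint varsFS := by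
  rintro _ hu _ hv hne
  obtain ⟨u, -, rfl⟩ := mem_components.1 hu
  obtain ⟨v, -, rfl⟩ := mem_components.1 hv
  refine disjoint_left.2 fun w hu hv => hne ?_
  rw [component_eq_of_connR (connR_of_mem_varsFS_component hu),
    component_eq_of_connR (connR_of_mem_varsFS_component hv)]

open Classical in
noncomputable def groundPart (F : Finset (Atom P V C)) : Finset (Atom P V C) :=
  {a ∈ F | a.vars = ∅}

open Classical in
lemma mem_groundPart : a ∈ groundPart F ↔ a ∈ F ∧ a.vars = ∅ :=
  Finset.mem_filter

lemma varsFS_groundPart (F : Finset (Atom P V C)) : varsFS (groundPart F) = ∅ :=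
  eq_empty_of_forall_notMem fun _ ⟨a, ha, hv⟩ => by
    simp [(mem_groundPart.1 ha).2] at hv

open Classical in
lemma groundPart_union_biUnion_components (F : Finset (Atom P V C)) :
    groundPart F ∪ (components F).biUnion id = F := by
  refine subset_antisymm (Finset.union_subset (fun a ha => (mem_groundPart.1 ha).1)
    (Finset.biUnion_subset.2 fun H hH => ?_)) fun a ha => ?_
  · obtain ⟨v, -, rfl⟩ := mem_components.1 hH
    exact component_subset
  · by_cases hground : a.vars = ∅
    · exact Finset.mem_union_left _ (mem_groundPart.2 ⟨ha, hground⟩)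
    · obtain ⟨v, hv⟩ := nonempty_iff_ne_empty.2 hground
      exact Finset.mem_union_right _ (Finset.mem_biUnion.2
        ⟨component F v, mem_components.2 ⟨v, ⟨a, ha, hv⟩, rfl⟩, mem_component ha hv⟩)

lemma Interp.satCQ_iff_groundPart_components (M : Interp P C) (F : Finset (Atom P V C)) :
    M.satCQ F ↔ M.satCQ (groundPart F) ∧ ∀ H ∈ components F, M.satCQ H := by
  classical
  conv_lhs => rw [← groundPart_union_biUnion_components F]
  rw [M.satCQ_union (by simp [varsFS_groundPart]),
    M.satCQ_biUnion (r := id) (pairwiseDisjoint_components F)]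
  rfl

end Components

section Compaction

variable {P V C : Type*}

lemma List.finite_setOf_length_le_forall_mem {α : Type*} {s : Set α} (hs : s.Finite) (n : ℕ) :
    {l : List α | l.length ≤ n ∧ ∀ x ∈ l, x ∈ s}.Finite := by
  have := hs.to_subtype
  refine ((List.finite_length_le s n).image (List.map (↑))).subset ?_
  rintro l ⟨hl, hls⟩
  obtain ⟨l', rfl⟩ : l ∈ Set.range (List.map ((↑) : s → α)) := by
    rwa [range_list_map_coe]
  exact ⟨l', by simpa using hl, rfl⟩

def boundedAtoms (A N : ℕ) : Set (Atom P ℕ C) :=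
  {a | a.args.length ≤ A ∧ a.vars ⊆ Iio N}

lemma finite_boundedAtoms [Finite P] [Finite C] (A N : ℕ) :
    (boundedAtoms A N : Set (Atom P ℕ C)).Finite := by
  have hargs := List.finite_setOf_length_le_forall_mem
    (((finite_Iio N).image Sum.inl).union (finite_range (Sum.inr : C → ℕ ⊕ C))) A
  refine ((finite_univ (α := P)).prod hargs).image (fun p => ⟨p.1, p.2⟩) |>.subset ?_
  rintro ⟨p, l⟩ ⟨hl, hvars⟩
  refine ⟨(p, l), ⟨trivial, hl, ?_⟩, rfl⟩
  rintro (v | c) hx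
  · exact Or.inl ⟨v, hvars hx, rfl⟩
  · exact Or.inr ⟨c, rfl⟩

lemma exists_injOn_varsFS (F : Finset (Atom P V C)) :
    ∃ ρ : V → ℕ, varsFS F ⊆ ρ ⁻¹' Iio (varsFS F).ncard ∧ InjOn ρ (varsFS F) :=
  (finite_varsFS F).exists_injOn_of_encard_le <| by
    rw [← (finite_varsFS F).cast_ncard_eq]
    exact (Set.Nat.encard_range _).ge

open Classical in
noncomputable def compactVars (F : Finset (Atom P V C)) : Finset (Atom P ℕ C) :=
  F.image (Atom.rename (exists_injOn_varsFS F).choose)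

open Classical in
lemma Interp.satCQ_compactVars [Nonempty V] (M : Interp P C) (F : Finset (Atom P V C)) :
    M.satCQ (compactVars F) ↔ M.satCQ F :=
  M.satCQ_image_rename (exists_injOn_varsFS F).choose_spec.2

lemma compactVars_subset_boundedAtoms {F : Finset (Atom P V C)} {A N : ℕ}
    (hA : ∀ a ∈ F, a.args.length ≤ A) (hN : (varsFS F).ncard ≤ N) :
    (compactVars F : Set (Atom P ℕ C)) ⊆ boundedAtoms A N := by
  classical
  simp only [compactVars, Finset.coe_image, image_subset_iff]
  intro a ha
  refine ⟨by simpa [Atom.rename] using hA a ha, ?_⟩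
  rw [Atom.vars_rename, image_subset_iff]
  exact fun v hv => lt_of_lt_of_le
    ((exists_injOn_varsFS F).choose_spec.1 ⟨a, ha, hv⟩) hN

lemma groundPart_subset_boundedAtoms {F : Finset (Atom P ℕ C)} {A : ℕ}
    (hA : ∀ a ∈ F, a.args.length ≤ A) (N : ℕ) :
    (groundPart F : Set (Atom P ℕ C)) ⊆ boundedAtoms A N := fun a ha =>
  have ha := mem_groundPart.1 ha
  ⟨hA a ha.1, by simp [ha.2]⟩

lemma compactVars_subset_boundedAtoms_of_mem_components {F H : Finset (Atom P V C)} {A k : ℕ}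
    (hA : ∀ a ∈ F, a.args.length ≤ A) (hk : ∀ v ∈ varsFS F, (component F v).card ≤ k)
    (hH : H ∈ components F) :
    (compactVars H : Set (Atom P ℕ C)) ⊆ boundedAtoms A (k * A) := by
  obtain ⟨v, hv, rfl⟩ := mem_components.1 hH
  have hA' : ∀ a ∈ component F v, a.args.length ≤ A := fun a ha => hA a (component_subset ha)
  exact compactVars_subset_boundedAtoms hA'
    ((ncard_varsFS_le hA').trans (Nat.mul_le_mul_right A (hk v hv)))

end Compaction

section Placement

variable {P C : Type*}

open Classical in
noncomputable def placeAt (i : ℕ) (F : Finset (Atom P ℕ C)) : Finset (Atom P ℕ C) :=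
  F.image (Atom.rename (Nat.pair i))

open Classical in
lemma Interp.satCQ_placeAt (M : Interp P C) (i : ℕ) (F : Finset (Atom P ℕ C)) :
    M.satCQ (placeAt i F) ↔ M.satCQ F :=
  M.satCQ_image_rename fun _ _ _ _ h => (Nat.pair_eq_pair.1 h).2

lemma pairwiseDisjoint_placeAt {ι : Type*} {e : ι → ℕ} (he : Function.Injective e)
    (r : ι → Finset (Atom P ℕ C)) (S : Set ι) :
    S.PairwiseDisjoint fun j => varsFS (placeAt (e j) (r j)) := by
  classical
  intro i _ j _ hij
  simp only [Function.onFun, placeAt, varsFS_image_rename]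
  refine disjoint_left.2 ?_
  rintro _ ⟨u, -, rfl⟩ ⟨v, -, h⟩
  exact hij (he (Nat.pair_eq_pair.1 h).1.symm)

end Placement

theorem stmt6_general {P C : Type} [Fintype P] [Fintype C]
    (arity : P → ℕ) (k : ℕ) :
    ∃ L : Finset (Finset (Atom P ℕ C)),
      ∀ F : Finset (Atom P ℕ C),
        (∀ a ∈ F, a.args.length = arity a.pred) →
        (∀ v ∈ varsFS F,
          Set.ncard {b : Atom P ℕ C | b ∈ F ∧ ∃ u ∈ b.vars, connR F v u} ≤ k) →
        ∃ G ∈ L, equivCQ F G := by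
  classical
  set A := Finset.univ.sup arity
  set T := (finite_boundedAtoms (P := P) (C := C) A (k * A)).toFinset
  have hT (H : Finset (Atom P ℕ C)) (hH : (H : Set _) ⊆ boundedAtoms A (k * A)) :
      H ∈ T.powerset :=
    Finset.mem_powerset.2 fun a ha => (Finite.mem_toFinset _).2 (hH ha)
  obtain ⟨e, he⟩ := Countable.exists_injective_nat (Finset (Atom P ℕ C))
  refine ⟨(T.powerset ×ˢ T.powerset.powerset).image
    fun p => p.1 ∪ p.2.biUnion fun H => placeAt (e H) H, fun F hlen hwidth => ?_⟩
  have hA : ∀ a ∈ F, a.args.length ≤ A :=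
    fun a ha => (hlen a ha).trans_le (Finset.le_sup (Finset.mem_univ _))
  have hk : ∀ v ∈ varsFS F, (component F v).card ≤ k := fun v hv => by
    simpa [← ncard_coe_finset, coe_component] using hwidth v hv
  have hcomponents : (components F).image compactVars ∈ T.powerset.powerset :=
    Finset.mem_powerset.2 fun _ h => by
      obtain ⟨H, hH, rfl⟩ := Finset.mem_image.1 h
      exact hT _ (compactVars_subset_boundedAtoms_of_mem_components hA hk hH)
  refine ⟨_, Finset.mem_image_of_mem _ (Finset.mk_mem_product
    (hT _ (groundPart_subset_boundedAtoms hA _)) hcomponents), fun M => ?_⟩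
  rw [M.satCQ_iff_groundPart_components, M.satCQ_union (by simp [varsFS_groundPart]),
    M.satCQ_biUnion (r := fun H => placeAt (e H) H) (pairwiseDisjoint_placeAt he id _)]
  simp only [Finset.forall_mem_image, M.satCQ_placeAt, M.satCQ_compactVars]

/-- over a finite set of predicates (with finite arities) and a
finite set of constants, there are, up to logical equivalence, only finitely
many existentially closed conjunctions of atoms whose connected width is at
most `k` (every connected component contains at most `k` atoms mentioning a
variable). -/
theorem stmt6 {P C : Type} [Fintype P] [DecidableEq P] [Fintype C] [DecidableEq C]
    (arity : P → ℕ) (k : ℕ) :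
    ∃ L : Finset (Finset (Atom P ℕ C)),
      ∀ F : Finset (Atom P ℕ C),
        (∀ a ∈ F, a.args.length = arity a.pred) →
        (∀ v ∈ varsFS F,
          Set.ncard {b : Atom P ℕ C | b ∈ F ∧ ∃ u ∈ b.vars, connR F v u} ≤ k) →
        ∃ G ∈ L, equivCQ F G :=
  stmt6_general arity k
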